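/- arXiv:2604.18515 — 5 statements merged into one kernel-verified Lean document; each statement's English description precedes it below -/
import Mathlib

section
/- Kirk asymptotic fixed point theorem in relational metric spaces: Suppose (i) T is strongly (d,R)-asymptotic (∑_n d(T^n x,T^n y) < ∞ whenever xRy) and left (d,R)-continuous; (ii) X is (d,R)-complete (every R-ascending d-Cauchy sequence converges) and R is d-almost-selfclosed (any R-ascending sequence converging to z has a subsequence (w_n) with w_n R z for all n); (iii) T is R-increasing and there exists x0 with x0 R Tx0. Then for every x with x R Tx, the orbit (T^n x) converges in d to a point of Fix(T), and moreover any two fixed points related by the reflexive transitive closure of R ∪ R⁻¹ coincide. -/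
/-!
The orbit of a point `x` with `x R T x` is `R`-ascending, and strong asymptoticity applied to the
pair `(x, T x)` makes its consecutive distances summable, so it is Cauchy and converges to some
`z`. Almost-selfclosedness gives a subsequence of the orbit that is `R`-related to `z`; left
continuity along it shows that `T` maps the orbit's limit to itself, so `T z = z`.
For uniqueness, orbits of `R`-related points are asymptotic, and by the triangle inequality this
persists along chains in `R ∪ R⁻¹`; the orbits of two fixed points are constant.
-/

open Filter Topology Function

section Orbit

variable {X : Type*} {T : X → X} {R : X → X → Prop}

theorem rel_iterate_succ_of_rel_apply (hincr : ∀ x y, R x y → R (T x) (T y)) {x : X}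
    (hx : R x (T x)) (n : ℕ) : R (T^[n] x) (T^[n + 1] x) := by
  induction n with
  | zero => exact hx
  | succ k ih => simpa only [iterate_succ_apply'] using hincr _ _ ih

variable [MetricSpace X]

theorem isFixedPt_of_tendsto_iterate_of_leftContinuous
    (hcont : ∀ (u : ℕ → X) (l : X), Tendsto u atTop (𝓝 l) → (∀ n, R (u n) l) →
      Tendsto (fun n => T (u n)) atTop (𝓝 (T l)))
    (hasc : ∀ (z : ℕ → X) (l : X), (∀ n, R (z n) (z (n + 1))) →
      Tendsto z atTop (𝓝 l) → ∃ φ : ℕ → ℕ, StrictMono φ ∧ ∀ n, R (z (φ n)) l)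
    {x z : X} (hasc_orbit : ∀ n, R (T^[n] x) (T^[n + 1] x))
    (hz : Tendsto (fun n => T^[n] x) atTop (𝓝 z)) : IsFixedPt T z := by
  obtain ⟨φ, hφ, hφR⟩ := hasc _ z hasc_orbit hz
  have h_sub : Tendsto (fun n => T^[φ n] x) atTop (𝓝 z) := hz.comp hφ.tendsto_atTop
  have h_image : Tendsto (fun n => T (T^[φ n] x)) atTop (𝓝 (T z)) := hcont _ z h_sub hφR
  have h_shift : Tendsto (fun n => T^[φ n + 1] x) atTop (𝓝 z) :=
    hz.comp ((tendsto_add_atTop_nat 1).comp hφ.tendsto_atTop)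
  simp only [← iterate_succ_apply' T] at h_image
  exact tendsto_nhds_unique h_image h_shift

theorem tendsto_dist_iterate_of_reflTransGen
    (hasy : ∀ x y, R x y → Tendsto (fun n => dist (T^[n] x) (T^[n] y)) atTop (𝓝 0)) {a b : X}
    (hab : Relation.ReflTransGen (fun a b => R a b ∨ R b a) a b) :
    Tendsto (fun n => dist (T^[n] a) (T^[n] b)) atTop (𝓝 0) := by
  induction hab with
  | refl => simpa only [dist_self] using tendsto_const_nhds
  | @tail c d _ hcd ih =>
    have h_step : Tendsto (fun n => dist (T^[n] c) (T^[n] d)) atTop (𝓝 0) := by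
      rcases hcd with hcd | hdc
      · exact hasy c d hcd
      · simpa only [dist_comm] using hasy d c hdc
    refine squeeze_zero (fun _ => dist_nonneg) (fun n => dist_triangle _ (T^[n] c) _) ?_
    simpa only [add_zero] using ih.add h_step

theorem IsFixedPt.eq_of_tendsto_dist_iterate {z₁ z₂ : X} (h₁ : IsFixedPt T z₁)
    (h₂ : IsFixedPt T z₂)
    (h : Tendsto (fun n => dist (T^[n] z₁) (T^[n] z₂)) atTop (𝓝 0)) : z₁ = z₂ := by
  simp only [iterate_fixed h₁, iterate_fixed h₂] at h
  exact dist_eq_zero.mp (tendsto_nhds_unique tendsto_const_nhds h)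

end Orbit

theorem stmt_3_general {X : Type*} [MetricSpace X] (T : X → X) (R : X → X → Prop)
    -- (i) strongly (d,R)-asymptotic and left (d,R)-continuous
    (hasy : ∀ x y, R x y → Summable fun n => dist (T^[n] x) (T^[n] y))
    (hcont : ∀ (u : ℕ → X) (l : X), Tendsto u atTop (𝓝 l) → (∀ n, R (u n) l) →
      Tendsto (fun n => T (u n)) atTop (𝓝 (T l)))
    -- (ii) (d,R)-complete and R d-almost-selfclosed
    (hcompl : ∀ z : ℕ → X, (∀ n, R (z n) (z (n + 1))) → CauchySeq z →
      ∃ l, Tendsto z atTop (𝓝 l))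
    (hasc : ∀ (z : ℕ → X) (l : X), (∀ n, R (z n) (z (n + 1))) →
      Tendsto z atTop (𝓝 l) → ∃ φ : ℕ → ℕ, StrictMono φ ∧ ∀ n, R (z (φ n)) l)
    -- (iii) R-increasing and R-semi-progressive
    (hincr : ∀ x y, R x y → R (T x) (T y)) :
    (∀ x, R x (T x) → ∃ z, T z = z ∧ Tendsto (fun n => T^[n] x) atTop (𝓝 z)) ∧
    (∀ z1 z2, T z1 = z1 → T z2 = z2 →
      Relation.ReflTransGen (fun a b => R a b ∨ R b a) z1 z2 → z1 = z2) := by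
  refine ⟨fun x hx => ?_, fun z₁ z₂ h₁ h₂ hrel => ?_⟩
  · have h_orbit := rel_iterate_succ_of_rel_apply hincr hx
    have h_cauchy : CauchySeq fun n => T^[n] x :=
      cauchySeq_of_summable_dist (by simpa only [iterate_succ_apply] using hasy x (T x) hx)
    obtain ⟨z, hz⟩ := hcompl _ h_orbit h_cauchy
    exact ⟨z, isFixedPt_of_tendsto_iterate_of_leftContinuous hcont hasc h_orbit hz, hz⟩
  · exact IsFixedPt.eq_of_tendsto_dist_iterate h₁ h₂
      (tendsto_dist_iterate_of_reflTransGen (fun x y h => (hasy x y h).tendsto_atTop_zero) hrel)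

/-- Kirk asymptotic fixed point theorem in relational metric spaces. -/
theorem stmt_3 {X : Type*} [MetricSpace X] (T : X → X) (R : X → X → Prop)
    (hrefl : ∀ x, R x x)
    -- (i) strongly (d,R)-asymptotic and left (d,R)-continuous
    (hasy : ∀ x y, R x y → Summable fun n => dist (T^[n] x) (T^[n] y))
    (hcont : ∀ (u : ℕ → X) (l : X), Tendsto u atTop (𝓝 l) → (∀ n, R (u n) l) →
      Tendsto (fun n => T (u n)) atTop (𝓝 (T l)))
    -- (ii) (d,R)-complete and R d-almost-selfclosed
    (hcompl : ∀ z : ℕ → X, (∀ n, R (z n) (z (n + 1))) → CauchySeq z →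
      ∃ l, Tendsto z atTop (𝓝 l))
    (hasc : ∀ (z : ℕ → X) (l : X), (∀ n, R (z n) (z (n + 1))) →
      Tendsto z atTop (𝓝 l) → ∃ φ : ℕ → ℕ, StrictMono φ ∧ ∀ n, R (z (φ n)) l)
    -- (iii) R-increasing and R-semi-progressive
    (hincr : ∀ x y, R x y → R (T x) (T y))
    (hprog : ∃ x0, R x0 (T x0)) :
    (∀ x, R x (T x) → ∃ z, T z = z ∧ Tendsto (fun n => T^[n] x) atTop (𝓝 z)) ∧
    (∀ z1 z2, T z1 = z1 → T z2 = z2 →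
      Relation.ReflTransGen (fun a b => R a b ∨ R b a) z1 z2 → z1 = z2) :=
  stmt_3_general T R hasy hcont hcompl hasc hincr
end

section
/- If X is (d,S)-complete (every S-ascending d-Cauchy sequence d-converges) and S is d-almost-selfclosed, then the equivalence class X0 with the chain metric e is a complete metric space: every e-Cauchy sequence in X0 e-converges in X0. -/
open Filter Topology

/-- Length of a finite chain: sum of distances of consecutive elements. -/
def chainLen {X : Type*} [MetricSpace X] : List X → ℝ
  | [] => 0
  | [_] => 0
  | a :: b :: l => dist a b + chainLen (b :: l)

/-- `l` is an S-chain from `x` to `y`. -/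
def IsSChain {X : Type*} (S : X → X → Prop) (x y : X) (l : List X) : Prop :=
  l.head? = some x ∧ l.getLast? = some y ∧ l.Chain' S

/-- The chain metric: infimum of d-lengths of S-chains from x to y. -/
noncomputable def chainDist {X : Type*} [MetricSpace X] (S : X → X → Prop)
    (x y : X) : ℝ :=
  sInf {r | ∃ l : List X, IsSChain S x y l ∧ r = chainLen l}

section ChainAux

set_option linter.unusedSectionVars false

variable {X : Type*} [MetricSpace X] {S : X → X → Prop}

theorem chainLen_nonneg : ∀ l : List X, 0 ≤ chainLen l
  | [] => le_refl 0
  | [_] => le_refl 0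
  | a :: b :: l => by
      have := chainLen_nonneg (b :: l)
      simp only [chainLen]
      exact add_nonneg dist_nonneg this

theorem chainDist_nonneg (x y : X) : 0 ≤ chainDist S x y :=
  Real.sInf_nonneg (by rintro r ⟨l, _, rfl⟩; exact chainLen_nonneg l)

theorem chainSet_bdd (x y : X) :
    BddBelow {r | ∃ l : List X, IsSChain S x y l ∧ r = chainLen l} :=
  ⟨0, by rintro r ⟨l, _, rfl⟩; exact chainLen_nonneg l⟩

theorem chainDist_le_chainLen {x y : X} {l : List X} (h : IsSChain S x y l) :
    chainDist S x y ≤ chainLen l :=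
  csInf_le (chainSet_bdd x y) ⟨l, h, rfl⟩

theorem chainLen_append' : ∀ (l : List X) (y : X) (m : List X),
    chainLen (l ++ y :: m) = chainLen (l ++ [y]) + chainLen (y :: m)
  | [], y, m => by simp [chainLen]
  | [a], y, m => by simp [chainLen]
  | a :: b :: l, y, m => by
      have := chainLen_append' (b :: l) y m
      simp only [List.cons_append, chainLen, List.append_eq] at this ⊢
      rw [this]; ring

theorem chainLen_snoc : ∀ (l : List X) (hl : l ≠ []) (y : X),
    chainLen (l ++ [y]) = chainLen l + dist (l.getLast hl) y
  | [], hl, y => absurd rfl hl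
  | [a], _, y => by simp [chainLen]
  | a :: b :: l, _, y => by
      have := chainLen_snoc (b :: l) (by simp) y
      simp only [List.cons_append, chainLen, List.append_eq] at this ⊢
      rw [this, List.getLast_cons (a := a) (l := b :: l) (by simp)]
      ring
set_option linter.unusedSectionVars false


open Filter Topology

variable {X : Type*} [MetricSpace X] {S : X → X → Prop}

theorem isSChain_append (hrefl : ∀ x, S x x) {x w y : X} {l m : List X}
    (h1 : IsSChain S x w l) (h2 : IsSChain S w y m) :
    IsSChain S x y (l ++ m) ∧ chainLen (l ++ m) = chainLen l + chainLen m := by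
  obtain ⟨hh1, hg1, hc1⟩ := h1
  obtain ⟨hh2, hg2, hc2⟩ := h2
  have hlne : l ≠ [] := by rintro rfl; simp at hh1
  obtain ⟨t, rfl⟩ : ∃ t, m = w :: t := by
    cases m with
    | nil => simp at hh2
    | cons a t => exact ⟨t, by rw [show a = w by simpa using hh2]⟩
  have hgl : l.getLast hlne = w := by
    rw [List.getLast?_eq_getLast (l := l) hlne] at hg1
    simpa using hg1
  refine ⟨⟨?_, ?_, ?_⟩, ?_⟩
  · rwa [List.head?_append_of_ne_nil _ hlne]
  · rwa [List.getLast?_append_of_ne_nil _ (by simp)]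
  · refine List.IsChain.append hc1 hc2 ?_
    intro a ha b hb
    rw [List.getLast?_eq_getLast (l := l) hlne] at ha
    simp only [Option.mem_def, Option.some.injEq] at ha hb
    rw [List.head?] at hb
    simp at hb
    rw [← ha, hgl, ← hb]
    exact hrefl w
  · rw [chainLen_append' l w t, chainLen_snoc l hlne w, hgl, dist_self, add_zero]

theorem exists_chain_of_rtg (hrefl : ∀ x, S x x) {x y : X}
    (h : Relation.ReflTransGen S x y) : ∃ l, IsSChain S x y l := by
  induction h with
  | refl => exact ⟨[x], by simp [IsSChain, List.Chain']⟩
  | @tail b c _ hbc ih =>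
      obtain ⟨l, hl⟩ := ih
      have h2 : IsSChain S b c [b, c] := ⟨by simp, by simp, List.isChain_pair.2 hbc⟩
      exact ⟨l ++ [b, c], (isSChain_append hrefl hl h2).1⟩

theorem rtg_of_chain : ∀ {x y : X} {l : List X}, IsSChain S x y l →
    Relation.ReflTransGen S x y := by
  intro x y l
  induction l generalizing x with
  | nil => rintro ⟨h, -, -⟩; simp at h
  | cons a t ih =>
      rintro ⟨hh, hg, hc⟩
      have hax : a = x := by simpa using hh
      subst hax
      cases t with
      | nil =>
          have : a = y := by simpa using hg
          subst this; exact Relation.ReflTransGen.refl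
      | cons b t' =>
          have hab : S a b := (List.isChain_cons_cons.mp hc).1
          have := ih (x := b) ⟨rfl, by simpa using hg, (List.isChain_cons_cons.mp hc).2⟩
          exact Relation.ReflTransGen.head hab this

theorem rtg_symm (hsymm : ∀ x y, S x y → S y x) {x y : X}
    (h : Relation.ReflTransGen S x y) : Relation.ReflTransGen S y x := by
  induction h with
  | refl => exact Relation.ReflTransGen.refl
  | tail _ hbc ih => exact Relation.ReflTransGen.head (hsymm _ _ hbc) ih

theorem chainDist_triangle' (hrefl : ∀ x, S x x) {x w y : X}
    (h1 : ∃ l, IsSChain S x w l) (h2 : ∃ l, IsSChain S w y l) :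
    chainDist S x y ≤ chainDist S x w + chainDist S w y := by
  refine le_of_forall_pos_le_add fun ε hε => ?_
  obtain ⟨l1, hl1⟩ := h1
  obtain ⟨l2, hl2⟩ := h2
  have hne1 : {r | ∃ l : List X, IsSChain S x w l ∧ r = chainLen l}.Nonempty :=
    ⟨chainLen l1, l1, hl1, rfl⟩
  have hne2 : {r | ∃ l : List X, IsSChain S w y l ∧ r = chainLen l}.Nonempty :=
    ⟨chainLen l2, l2, hl2, rfl⟩
  obtain ⟨r1, ⟨m1, hm1, rfl⟩, hr1⟩ :=
    exists_lt_of_csInf_lt hne1 (lt_add_of_pos_right _ (half_pos hε) :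
      chainDist S x w < chainDist S x w + ε / 2)
  obtain ⟨r2, ⟨m2, hm2, rfl⟩, hr2⟩ :=
    exists_lt_of_csInf_lt hne2 (lt_add_of_pos_right _ (half_pos hε) :
      chainDist S w y < chainDist S w y + ε / 2)
  obtain ⟨hch, hlen⟩ := isSChain_append hrefl hm1 hm2
  calc chainDist S x y ≤ chainLen (m1 ++ m2) := chainDist_le_chainLen hch
    _ = chainLen m1 + chainLen m2 := hlen
    _ ≤ (chainDist S x w + ε / 2) + (chainDist S w y + ε / 2) :=
        add_le_add hr1.le hr2.le
    _ = chainDist S x w + chainDist S w y + ε := by ring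

theorem chainDist_lt_iff {x y : X} {ε : ℝ}
    (hne : ∃ l, IsSChain S x y l) (h : chainDist S x y < ε) :
    ∃ l, IsSChain S x y l ∧ chainLen l < ε := by
  obtain ⟨l0, hl0⟩ := hne
  have hne' : {r | ∃ l : List X, IsSChain S x y l ∧ r = chainLen l}.Nonempty :=
    ⟨chainLen l0, l0, hl0, rfl⟩
  obtain ⟨r, ⟨l, hl, rfl⟩, hr⟩ := exists_lt_of_csInf_lt hne' h
  exact ⟨l, hl, hr⟩

theorem isSChain_snoc {x w y : X} {l : List X} (h : IsSChain S x w l) (hw : S w y) :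
    IsSChain S x y (l ++ [y]) ∧ chainLen (l ++ [y]) = chainLen l + dist w y := by
  obtain ⟨hh, hg, hc⟩ := h
  have hlne : l ≠ [] := by rintro rfl; simp at hh
  have hgl : l.getLast hlne = w := by
    rw [List.getLast?_eq_getLast (l := l) hlne] at hg
    simpa using hg
  refine ⟨⟨?_, ?_, ?_⟩, ?_⟩
  · rwa [List.head?_append_of_ne_nil _ hlne]
  · rw [List.getLast?_append_of_ne_nil _ (by simp)]; simp
  · refine List.IsChain.append hc (by simp) ?_
    intro a ha b hb
    rw [List.getLast?_eq_getLast (l := l) hlne] at ha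
    simp only [Option.mem_def, Option.some.injEq] at ha hb
    simp only [List.head?] at hb
    simp at hb
    rw [← ha, hgl, ← hb]
    exact hw
  · rw [chainLen_snoc l hlne y, hgl]

theorem isSChain_seq {f : ℕ → X} (hf : ∀ t, S (f t) (f (t + 1))) :
    ∀ n : ℕ, IsSChain S (f 0) (f n) ((List.range (n + 1)).map f) ∧
      chainLen ((List.range (n + 1)).map f) =
        ∑ t ∈ Finset.range n, dist (f t) (f (t + 1)) := by
  intro n
  induction n with
  | zero =>
      have : List.range 1 = [0] := rfl
      refine ⟨⟨?_, ?_, ?_⟩, ?_⟩ <;> simp [this, chainLen, List.Chain']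
  | succ n ih =>
      have hsplit : (List.range (n + 2)).map f
          = (List.range (n + 1)).map f ++ [f (n + 1)] := by
        rw [List.range_succ, List.map_append]; simp
      obtain ⟨hch, hlen⟩ := isSChain_snoc ih.1 (hf n)
      rw [hsplit]
      exact ⟨hch, by rw [hlen, ih.2, Finset.sum_range_succ]⟩

theorem chainDist_ascend {z : ℕ → X} (hz : ∀ n, S (z n) (z (n + 1)))
    (i n : ℕ) : chainDist S (z i) (z (i + n)) ≤
      ∑ t ∈ Finset.range n, dist (z (i + t)) (z (i + t + 1)) := by
  have h := isSChain_seq (S := S) (f := fun t => z (i + t)) (fun t => hz (i + t)) n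
  simpa [add_assoc] using (chainDist_le_chainLen (h.1)).trans_eq h.2

theorem sum_dist_getD (x0 : X) : ∀ l : List X,
    ∑ t ∈ Finset.range (l.length - 1), dist (l.getD t x0) (l.getD (t + 1) x0)
      = chainLen l
  | [] => by simp [chainLen]
  | [a] => by simp [chainLen]
  | a :: b :: t => by
      have ih := sum_dist_getD x0 (b :: t)
      have hlen : (a :: b :: t).length - 1 = t.length + 1 := by simp
      rw [hlen, Finset.sum_range_succ']
      rw [show (b :: t).length - 1 = t.length by simp] at ih
      simp only [List.getD_cons_succ, List.getD_cons_zero] at ih ⊢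
      rw [ih, chainLen, add_comm]

theorem getD_of_prefix {l₁ l₂ : List X} (h : l₁ <+: l₂) {n : ℕ}
    (hn : n < l₁.length) (x0 : X) : l₁.getD n x0 = l₂.getD n x0 := by
  obtain ⟨t, rfl⟩ := h
  rw [List.getD_eq_getElem _ _ hn,
    List.getD_eq_getElem _ _ (hn.trans_le (by simp)),
    List.getElem_append_left]

end ChainAux

/-- If X is (d,S)-complete and S is d-almost-selfclosed, then the equivalence
class X0 with the chain metric e is complete: every e-Cauchy sequence in X0
e-converges in X0. -/
theorem stmt_10 {X : Type*} [MetricSpace X] (S : X → X → Prop)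
    (hrefl : ∀ x, S x x) (hsymm : ∀ x y, S x y → S y x) (x0 : X)
    (hcompl : ∀ z : ℕ → X, (∀ n, S (z n) (z (n + 1))) → CauchySeq z →
      ∃ l, Tendsto z atTop (𝓝 l))
    (hasc : ∀ (z : ℕ → X) (l : X), (∀ n, S (z n) (z (n + 1))) →
      Tendsto z atTop (𝓝 l) → ∃ φ : ℕ → ℕ, StrictMono φ ∧ ∀ n, S (z (φ n)) l) :
    ∀ u : ℕ → X, (∀ n, Relation.ReflTransGen S x0 (u n)) →
      (∀ ε : ℝ, 0 < ε → ∃ N, ∀ m ≥ N, ∀ n ≥ N, chainDist S (u m) (u n) < ε) →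
      ∃ z, Relation.ReflTransGen S x0 z ∧
        Tendsto (fun n => chainDist S (u n) z) atTop (𝓝 0) := by
  intro u hu hcau
  have conn : ∀ a b : X, Relation.ReflTransGen S x0 a → Relation.ReflTransGen S x0 b →
      ∃ l, IsSChain S a b l := fun a b ha hb =>
    exists_chain_of_rtg hrefl ((rtg_symm hsymm ha).trans hb)
  have hhalf : ∀ k : ℕ, (0:ℝ) < (2:ℝ)⁻¹ ^ k := fun k => pow_pos (by norm_num) k
  choose N hN using fun k : ℕ => hcau _ (hhalf k)
  set M : ℕ → ℕ := fun k => (Finset.range (k + 1)).sup N with hM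
  have hNM : ∀ k, N k ≤ M k := fun k => Finset.le_sup (Finset.self_mem_range_succ k)
  have hMmono : Monotone M := fun a b hab =>
    Finset.sup_mono (Finset.range_subset_range.2 (by omega))
  set v : ℕ → X := fun k => u (M k) with hv
  have hvrtg : ∀ k, Relation.ReflTransGen S x0 (v k) := fun k => hu (M k)
  have hvk : ∀ k, chainDist S (v k) (v (k + 1)) < (2:ℝ)⁻¹ ^ k := fun k =>
    hN k (M k) (hNM k) (M (k + 1)) ((hNM k).trans (hMmono (by omega)))
  have hcex : ∀ k, ∃ l, IsSChain S (v k) (v (k + 1)) l ∧ chainLen l < (2:ℝ)⁻¹ ^ k :=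
    fun k => chainDist_lt_iff (conn _ _ (hvrtg k) (hvrtg (k + 1))) (hvk k)
  choose c hc hclen using hcex
  have hc' : ∀ k, IsSChain S (v k) (v (k + 1)) (c k ++ [v (k + 1)]) ∧
      chainLen (c k ++ [v (k + 1)]) = chainLen (c k) := by
    intro k
    have h2 : IsSChain S (v (k + 1)) (v (k + 1)) [v (k + 1)] := ⟨by simp, by simp, List.isChain_singleton _⟩
    obtain ⟨hch, hlen⟩ := isSChain_append hrefl (hc k) h2
    exact ⟨hch, by rw [hlen]; simp [chainLen]⟩
  set c' : ℕ → List X := fun k => c k ++ [v (k + 1)] with hc'def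
  set L : ℕ → List X := fun k => Nat.rec [v 0] (fun k ih => ih ++ c' k) k with hLdef
  have hL0 : L 0 = [v 0] := rfl
  have hLsucc : ∀ k, L (k + 1) = L k ++ c' k := fun k => rfl
  have hLchain : ∀ k, IsSChain S (v 0) (v k) (L k) ∧
      chainLen (L k) = ∑ j ∈ Finset.range k, chainLen (c j) := by
    intro k; induction k with
    | zero => exact ⟨⟨by simp [hL0], by simp [hL0], by simp [hL0, List.Chain']⟩, by simp [hL0, chainLen]⟩
    | succ k ih =>
        obtain ⟨hch, hlen⟩ := isSChain_append hrefl ih.1 (hc' k).1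
        rw [hLsucc]
        exact ⟨hch, by rw [hlen, ih.2, (hc' k).2, Finset.sum_range_succ]⟩
  have hLlen : ∀ k, k + 1 ≤ (L k).length := by
    intro k; induction k with
    | zero => simp [hL0]
    | succ k ih =>
        rw [hLsucc]
        have h1 : 1 ≤ (c' k).length := by simp [hc'def]
        simp only [List.length_append]; omega
  have hLpre : ∀ k m, k ≤ m → L k <+: L m := by
    intro k m hkm
    induction m with
    | zero =>
        have : k = 0 := by omega
        subst this; exact List.prefix_refl _
    | succ m ih =>
        rcases Nat.lt_or_ge k (m + 1) with h | h
        · exact (ih (by omega)).trans ⟨c' m, (hLsucc m).symm⟩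
        · have : k = m + 1 := by omega
          subst this; exact List.prefix_refl _
  set z : ℕ → X := fun n => (L (n + 1)).getD n x0 with hzdef
  have hzeq : ∀ K n, n < (L K).length → z n = (L K).getD n x0 := by
    intro K n hn
    rcases le_total (n + 1) K with h | h
    · exact getD_of_prefix (hLpre _ _ h) (by have := hLlen (n + 1); omega) x0
    · exact (getD_of_prefix (hLpre _ _ h) hn x0).symm
  have hzS : ∀ n, S (z n) (z (n + 1)) := by
    intro n
    have hlen2 : n + 1 < (L (n + 2)).length := by have := hLlen (n + 2); omega
    have hlen1 : n < (L (n + 2)).length := by omega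
    have e1 : z n = (L (n + 2)).getD n x0 := hzeq (n + 2) n hlen1
    have e2 : z (n + 1) = (L (n + 2)).getD (n + 1) x0 := hzeq (n + 2) (n + 1) hlen2
    have hch := (hLchain (n + 2)).1.2.2
    rw [List.Chain', List.isChain_iff_getElem] at hch
    have := hch n (by omega)
    rw [e1, e2, List.getD_eq_getElem _ _ hlen1, List.getD_eq_getElem _ _ hlen2]
    simpa using this
  have hvz : ∀ k, v k = z ((L k).length - 1) := by
    intro k
    have hne : L k ≠ [] := List.ne_nil_of_length_pos (by have := hLlen k; omega)
    have hlast : (L k).getLast hne = v k := by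
      have h := (hLchain k).1.2.1
      rw [List.getLast?_eq_getLast hne] at h
      simpa using h
    have hlt : (L k).length - 1 < (L k).length := by have := hLlen k; omega
    rw [hzeq k _ hlt, List.getD_eq_getElem _ _ hlt, ← List.getLast_eq_getElem]
    exact hlast.symm
  have hgeom : ∀ a b : ℕ, ∑ j ∈ Finset.Ico a b, (2:ℝ)⁻¹ ^ j ≤ (2:ℝ)⁻¹ ^ a * 2 := by
    intro a b
    rcases le_total a b with h | h
    · rw [Finset.sum_Ico_eq_sum_range]
      calc ∑ i ∈ Finset.range (b - a), (2:ℝ)⁻¹ ^ (a + i)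
          = (2:ℝ)⁻¹ ^ a * ∑ i ∈ Finset.range (b - a), (2:ℝ)⁻¹ ^ i := by
            rw [Finset.mul_sum]
            exact Finset.sum_congr rfl fun i _ => pow_add _ _ _
        _ ≤ (2:ℝ)⁻¹ ^ a * 2 := by
            refine mul_le_mul_of_nonneg_left ?_ (hhalf a).le
            simpa [one_div] using sum_geometric_two_le (b - a)
    · rw [Finset.Ico_eq_empty (by omega)]
      simp only [Finset.sum_empty]
      positivity
  have hLseg : ∀ k K, k ≤ K → chainLen (L K) - chainLen (L k) ≤ (2:ℝ)⁻¹ ^ k * 2 := by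
    intro k K hkK
    rw [(hLchain K).2, (hLchain k).2, ← Finset.sum_Ico_eq_sub _ hkK]
    calc ∑ j ∈ Finset.Ico k K, chainLen (c j)
        ≤ ∑ j ∈ Finset.Ico k K, (2:ℝ)⁻¹ ^ j :=
          Finset.sum_le_sum fun j _ => (hclen j).le
      _ ≤ _ := hgeom k K
  have hsum_eq : ∀ K, ∑ t ∈ Finset.range ((L K).length - 1),
      dist (z t) (z (t + 1)) = chainLen (L K) := by
    intro K
    rw [← sum_dist_getD x0 (L K)]
    refine Finset.sum_congr rfl fun t ht => ?_
    rw [Finset.mem_range] at ht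
    have h1 : t < (L K).length := by omega
    have h2 : t + 1 < (L K).length := by omega
    rw [hzeq K t h1, hzeq K (t + 1) h2]
  have hL0len : chainLen (L 0) = 0 := by rw [(hLchain 0).2]; simp
  have hsum_le : ∀ n, ∑ t ∈ Finset.range n, dist (z t) (z (t + 1)) ≤ 2 := by
    intro n
    have h1 : n ≤ (L n).length - 1 := by have := hLlen n; omega
    calc ∑ t ∈ Finset.range n, dist (z t) (z (t + 1))
        ≤ ∑ t ∈ Finset.range ((L n).length - 1), dist (z t) (z (t + 1)) :=
          Finset.sum_le_sum_of_subset_of_nonneg (Finset.range_subset_range.2 h1)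
            fun _ _ _ => dist_nonneg
      _ = chainLen (L n) := hsum_eq n
      _ ≤ 2 := by have := hLseg 0 n (Nat.zero_le n); rw [hL0len] at this; simpa using this
  have hsummable : Summable fun n => dist (z n) (z (n + 1)) :=
    summable_of_sum_range_le (fun n => dist_nonneg) hsum_le
  obtain ⟨w, hw⟩ := hcompl z hzS (cauchySeq_of_summable_dist hsummable)
  obtain ⟨φ, hφmono, hφS⟩ := hasc z w hzS hw
  have hz0 : z 0 = v 0 := by
    have h := hvz 0
    rw [show (L 0).length - 1 = 0 by rw [hL0]; rfl] at h
    exact h.symm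
  have hzrtg : ∀ n, Relation.ReflTransGen S x0 (z n) := by
    intro n
    have h0 : Relation.ReflTransGen S (z 0) (z n) := by
      induction n with
      | zero => exact Relation.ReflTransGen.refl
      | succ n ih => exact ih.tail (hzS n)
    refine Relation.ReflTransGen.trans ?_ h0
    rw [hz0]; exact hvrtg 0
  have hwrtg : Relation.ReflTransGen S x0 w := (hzrtg (φ 0)).tail (hφS 0)
  refine ⟨w, hwrtg, ?_⟩
  rw [Metric.tendsto_atTop]
  intro ε hε
  obtain ⟨k, hk⟩ : ∃ k : ℕ, (2:ℝ)⁻¹ ^ k < ε / 4 :=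
    exists_pow_lt_of_lt_one (by linarith) (by norm_num)
  rw [Metric.tendsto_atTop] at hw
  obtain ⟨J, hJ⟩ := hw ((2:ℝ)⁻¹ ^ k) (hhalf k)
  set i := (L k).length - 1 with hidef
  set m := φ (max J i) with hmdef
  have hmJ : J ≤ m := le_trans (le_max_left _ _) hφmono.le_apply
  have hmi : i ≤ m := le_trans (le_max_right _ _) hφmono.le_apply
  have hb1 : chainDist S (v k) (z m) ≤ (2:ℝ)⁻¹ ^ k * 2 := by
    have heq : v k = z i := hvz k
    have hasc' := chainDist_ascend hzS i (m - i)
    rw [show i + (m - i) = m by omega] at hasc'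
    rw [heq]
    refine hasc'.trans ?_
    have hIco : ∑ t ∈ Finset.range (m - i), dist (z (i + t)) (z (i + t + 1))
        = ∑ t ∈ Finset.Ico i m, dist (z t) (z (t + 1)) :=
      (Finset.sum_Ico_eq_sum_range (fun t => dist (z t) (z (t + 1))) i m).symm
    rw [hIco]
    set K := m + 1 with hKdef
    have hiK : i ≤ (L K).length - 1 := by have := hLlen K; omega
    have hmK : m ≤ (L K).length - 1 := by have := hLlen K; omega
    have hkK : k ≤ K := by
      have := hLlen k
      omega
    calc ∑ t ∈ Finset.Ico i m, dist (z t) (z (t + 1))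
        ≤ ∑ t ∈ Finset.Ico i ((L K).length - 1), dist (z t) (z (t + 1)) :=
          Finset.sum_le_sum_of_subset_of_nonneg
            (Finset.Ico_subset_Ico le_rfl hmK) fun _ _ _ => dist_nonneg
      _ = ∑ t ∈ Finset.range ((L K).length - 1), dist (z t) (z (t + 1))
          - ∑ t ∈ Finset.range i, dist (z t) (z (t + 1)) :=
          Finset.sum_Ico_eq_sub _ hiK
      _ = chainLen (L K) - chainLen (L k) := by
          rw [hsum_eq K, hidef, hsum_eq k]
      _ ≤ (2:ℝ)⁻¹ ^ k * 2 := hLseg k K hkK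
  have hb2 : chainDist S (z m) w ≤ (2:ℝ)⁻¹ ^ k := by
    have hSm : S (z m) w := hφS (max J i)
    have hchm : IsSChain S (z m) w [z m, w] := ⟨by simp, by simp, List.isChain_pair.2 hSm⟩
    have h1 := chainDist_le_chainLen hchm
    have hd : chainLen [z m, w] = dist (z m) w := by simp [chainLen]
    have hdlt : dist (z m) w < (2:ℝ)⁻¹ ^ k := hJ m hmJ
    rw [hd] at h1
    linarith
  refine ⟨M k, fun n hn => ?_⟩
  have hn1 : chainDist S (u n) (v k) < (2:ℝ)⁻¹ ^ k :=
    hN k n (le_trans (hNM k) hn) (M k) (hNM k)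
  have t1 : chainDist S (u n) w ≤ chainDist S (u n) (v k) + chainDist S (v k) w :=
    chainDist_triangle' hrefl (conn _ _ (hu n) (hvrtg k)) (conn _ _ (hvrtg k) hwrtg)
  have t2 : chainDist S (v k) w ≤ chainDist S (v k) (z m) + chainDist S (z m) w :=
    chainDist_triangle' hrefl (conn _ _ (hvrtg k) (hzrtg m)) (conn _ _ (hzrtg m) hwrtg)
  rw [Real.dist_eq, sub_zero, abs_of_nonneg (chainDist_nonneg _ _)]
  linarith
end

section
/- Alam–Imdad linear contraction principle on rs-relational metric spaces: let S be a reflexive symmetric relation on a metric space (X,d), and T : X → X such that (i) d(Tx,Ty) ≤ λ d(x,y) whenever x S y, with λ ∈ (0,1); (ii) X is (d,S)-complete and S is d-almost-selfclosed; (iii) T is S-increasing and there exists x0 with x0 S^ω T x0. Then for each x with x S^ω Tx, the orbit (T^n x) d-converges to a fixed point of T; moreover any two fixed points related by S^ω are equal. -/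
open Filter Topology

/-- Alam–Imdad linear contraction principle on rs-relational metric spaces. -/
theorem stmt_13 {X : Type*} [MetricSpace X] (S : X → X → Prop)
    (hrefl : ∀ x, S x x) (hsymm : ∀ x y, S x y → S y x)
    (T : X → X) (lam : ℝ) (hlam0 : 0 < lam) (hlam1 : lam < 1)
    -- (i) (d,S;λ)-contractive
    (hcontr : ∀ x y, S x y → dist (T x) (T y) ≤ lam * dist x y)
    -- (ii) (d,S)-complete and S d-almost-selfclosed
    (hcompl : ∀ z : ℕ → X, (∀ n, S (z n) (z (n + 1))) → CauchySeq z →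
      ∃ l, Tendsto z atTop (𝓝 l))
    (hasc : ∀ (z : ℕ → X) (l : X), (∀ n, S (z n) (z (n + 1))) →
      Tendsto z atTop (𝓝 l) → ∃ φ : ℕ → ℕ, StrictMono φ ∧ ∀ n, S (z (φ n)) l)
    -- (iii) S-increasing and S^ω-semi-progressive
    (hincr : ∀ x y, S x y → S (T x) (T y))
    (hprog : ∃ x0, Relation.ReflTransGen S x0 (T x0)) :
    (∀ x, Relation.ReflTransGen S x (T x) →
      ∃ z, T z = z ∧ Tendsto (fun n => T^[n] x) atTop (𝓝 z)) ∧
    (∀ z1 z2, T z1 = z1 → T z2 = z2 →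
      Relation.ReflTransGen S z1 z2 → z1 = z2) := by
  -- iterated monotonicity
  have hincrN : ∀ (n : ℕ) (a b : X), S a b → S (T^[n] a) (T^[n] b) := by
    intro n
    induction n with
    | zero => intro a b h; simpa using h
    | succ m ih =>
      intro a b h
      rw [Function.iterate_succ_apply', Function.iterate_succ_apply']
      exact hincr _ _ (ih a b h)
  -- iterated contraction along a single S-step
  have hcontrN : ∀ (n : ℕ) (a b : X), S a b →
      dist (T^[n] a) (T^[n] b) ≤ lam ^ n * dist a b := by
    intro n
    induction n with
    | zero => intro a b _; simp
    | succ m ih =>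
      intro a b h
      rw [Function.iterate_succ_apply', Function.iterate_succ_apply']
      calc dist (T (T^[m] a)) (T (T^[m] b)) ≤ lam * dist (T^[m] a) (T^[m] b) :=
            hcontr _ _ (hincrN m a b h)
        _ ≤ lam * (lam ^ m * dist a b) := by
            exact mul_le_mul_of_nonneg_left (ih a b h) hlam0.le
        _ = lam ^ (m + 1) * dist a b := by ring
  -- chain extraction from the equivalence closure
  have hchain : ∀ a b : X, Relation.ReflTransGen S a b →
      ∃ (k : ℕ) (c : ℕ → X), c 0 = a ∧ c k = b ∧ ∀ i < k, S (c i) (c (i + 1)) := by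
    intro a b h
    induction h with
    | refl => exact ⟨0, fun _ => a, rfl, rfl, by omega⟩
    | @tail b' c'' hab hbc ih =>
      obtain ⟨k, c, hc0, hck, hstep⟩ := ih
      refine ⟨k + 1, fun i => if i ≤ k then c i else c'', by simpa using hc0, by simp, ?_⟩
      intro i hi
      by_cases hik : i < k
      · have h1 : i ≤ k := hik.le
        have h2 : i + 1 ≤ k := hik
        simp only [h1, h2, if_true]
        exact hstep i hik
      · have hik2 : i = k := by omega
        have h1 : i ≤ k := le_of_eq hik2
        have h2 : ¬ (i + 1 ≤ k) := by omega
        simp only [if_pos h1, if_neg h2]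
        rw [hik2, hck]
        exact hbc
  -- iterated contraction along a chain: key for uniqueness
  have hcontrChain : ∀ a b : X, Relation.ReflTransGen S a b →
      ∃ C : ℝ, ∀ n, dist (T^[n] a) (T^[n] b) ≤ lam ^ n * C := by
    intro a b h
    induction h with
    | refl => exact ⟨0, fun n => by simp⟩
    | @tail b' c'' hab hbc ih =>
      obtain ⟨C, hC⟩ := ih
      refine ⟨C + dist b' c'', fun n => ?_⟩
      calc dist (T^[n] a) (T^[n] c'') ≤ dist (T^[n] a) (T^[n] b') + dist (T^[n] b') (T^[n] c'') :=
            dist_triangle _ _ _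
        _ ≤ lam ^ n * C + lam ^ n * dist b' c'' := add_le_add (hC n) (hcontrN n _ _ hbc)
        _ = lam ^ n * (C + dist b' c'') := by ring
  constructor
  · -- existence
    intro x hx
    obtain ⟨k, c, hc0, hck, hstep⟩ := hchain x (T x) hx
    rcases Nat.eq_zero_or_pos k with hk0 | hk
    · -- x is already a fixed point
      subst hk0
      have hfix : T x = x := by rw [← hck, hc0]
      refine ⟨x, hfix, ?_⟩
      have : (fun n => T^[n] x) = fun _ => x := funext fun n => Function.iterate_fixed hfix n
      rw [this]
      exact tendsto_const_nhds
    · -- interleave the orbits of the chain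
      set w : ℕ → X := fun n => T^[n / k] (c (n % k)) with hw
      have hmodlt : ∀ n : ℕ, n % k < k := fun n => Nat.mod_lt n hk
      have hsuccw : ∀ n : ℕ, w (n + 1) = T^[n / k] (c (n % k + 1)) := by
        intro n
        have hdm : k * (n / k) + n % k = n := Nat.div_add_mod n k
        by_cases hc : n % k + 1 < k
        · have h1 : (n + 1) % k = n % k + 1 := by
            conv_lhs => rw [← hdm]
            rw [add_assoc, Nat.mul_add_mod]
            exact Nat.mod_eq_of_lt hc
          have h2 : (n + 1) / k = n / k := by
            conv_lhs => rw [← hdm]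
            rw [add_assoc, Nat.mul_add_div hk]
            simp [Nat.div_eq_of_lt hc]
          simp [hw, h1, h2]
        · have hkk : n % k + 1 = k := by have := hmodlt n; omega
          have h1 : (n + 1) % k = 0 := by
            conv_lhs => rw [← hdm]
            rw [add_assoc, hkk, Nat.mul_add_mod, Nat.mod_self]
          have h2 : (n + 1) / k = n / k + 1 := by
            conv_lhs => rw [← hdm]
            rw [add_assoc, hkk, Nat.mul_add_div hk, Nat.div_self hk]
          simp only [hw, h1, h2, hc0]
          rw [Function.iterate_succ_apply, ← hck, hkk]
      have hascend : ∀ n, S (w n) (w (n + 1)) := by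
        intro n
        rw [hsuccw n]
        exact hincrN _ _ _ (hstep _ (hmodlt n))
      -- distance bound
      set D : ℝ := ∑ i ∈ Finset.range k, dist (c i) (c (i + 1)) with hD
      have hDnn : ∀ i ∈ Finset.range k, (0:ℝ) ≤ dist (c i) (c (i + 1)) :=
        fun i _ => dist_nonneg
      have hdistw : ∀ n, dist (w n) (w (n + 1)) ≤ lam ^ (n / k) * D := by
        intro n
        rw [hsuccw n]
        calc dist (T^[n / k] (c (n % k))) (T^[n / k] (c (n % k + 1)))
            ≤ lam ^ (n / k) * dist (c (n % k)) (c (n % k + 1)) :=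
              hcontrN _ _ _ (hstep _ (hmodlt n))
          _ ≤ lam ^ (n / k) * D := by
              apply mul_le_mul_of_nonneg_left _ (pow_nonneg hlam0.le _)
              exact Finset.single_le_sum hDnn (Finset.mem_range.mpr (hmodlt n))
      -- summability of the geometric-in-blocks series
      have hgeom : Summable (fun j : ℕ => lam ^ j) :=
        summable_geometric_of_lt_one hlam0.le hlam1
      have hblocksum : ∀ N : ℕ, ∑ i ∈ Finset.range (k * N), lam ^ (i / k)
          = (∑ j ∈ Finset.range N, lam ^ j) * k := by
        intro N
        induction N with
        | zero => simp
        | succ M ihM =>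
          have hsplit : ∑ i ∈ Finset.range (k * (M + 1)), lam ^ (i / k)
              = ∑ i ∈ Finset.range (k * M), lam ^ (i / k)
                + ∑ i ∈ Finset.Ico (k * M) (k * (M + 1)), lam ^ (i / k) := by
            rw [Finset.range_eq_Ico, Finset.range_eq_Ico]
            exact (Finset.sum_Ico_consecutive (fun i => lam ^ (i / k)) (Nat.zero_le _)
              (Nat.mul_le_mul_left k (Nat.le_succ M))).symm
          have hIco : ∑ i ∈ Finset.Ico (k * M) (k * (M + 1)), lam ^ (i / k)
              = (k : ℝ) * lam ^ M := by
            rw [Finset.sum_congr rfl (fun i hi => ?_), Finset.sum_const, Nat.card_Ico]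
            · have : k * (M + 1) - k * M = k := by rw [Nat.mul_succ]; omega
              rw [this, nsmul_eq_mul]
            · obtain ⟨h1, h2⟩ := Finset.mem_Ico.mp hi
              have : i / k = M := Nat.div_eq_of_lt_le
                (by rw [Nat.mul_comm]; exact h1) (by rw [Nat.mul_comm]; exact h2)
              rw [this]
          rw [hsplit, ihM, hIco, Finset.sum_range_succ]
          ring
      have hsumlek : Summable (fun n : ℕ => lam ^ (n / k)) := by
        apply summable_of_sum_range_le (c := (∑' j : ℕ, lam ^ j) * k)
          (fun n => pow_nonneg hlam0.le _)
        intro N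
        calc ∑ i ∈ Finset.range N, lam ^ (i / k)
            ≤ ∑ i ∈ Finset.range (k * N), lam ^ (i / k) := by
              apply Finset.sum_le_sum_of_subset_of_nonneg
              · exact Finset.range_subset_range.mpr (Nat.le_mul_of_pos_left N hk)
              · exact fun i _ _ => pow_nonneg hlam0.le _
          _ = (∑ j ∈ Finset.range N, lam ^ j) * k := hblocksum N
          _ ≤ (∑' j : ℕ, lam ^ j) * k := by
              apply mul_le_mul_of_nonneg_right _ (Nat.cast_nonneg k)
              exact Summable.sum_le_tsum _ (fun i _ => pow_nonneg hlam0.le _) hgeom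
      have hsummable : Summable (fun n => dist (w n) (w (n + 1))) :=
        Summable.of_nonneg_of_le (fun n => dist_nonneg) hdistw (hsumlek.mul_right D)
      have hcauchy : CauchySeq w := cauchySeq_of_summable_dist hsummable
      obtain ⟨l, hl⟩ := hcompl w hascend hcauchy
      -- T shifts w by k
      have hTw : ∀ m, T (w m) = w (m + k) := by
        intro m
        have h1 : (m + k) % k = m % k := Nat.add_mod_right m k
        have h2 : (m + k) / k = m / k + 1 := Nat.add_div_right m hk
        simp only [hw, h1, h2]
        rw [Function.iterate_succ_apply']
      -- the limit is a fixed point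
      obtain ⟨φ, hφmono, hφS⟩ := hasc w l hascend hl
      have hwφ : Tendsto (fun n => w (φ n)) atTop (𝓝 l) := hl.comp hφmono.tendsto_atTop
      have hwφk : Tendsto (fun n => w (φ n + k)) atTop (𝓝 l) := by
        apply hl.comp
        apply tendsto_atTop_atTop.mpr
        intro b
        exact ⟨b, fun a ha => le_trans (le_trans ha (StrictMono.le_apply hφmono)) (Nat.le_add_right _ _)⟩
      have hTl : Tendsto (fun n => T (w (φ n))) atTop (𝓝 (T l)) := by
        rw [tendsto_iff_dist_tendsto_zero]
        have hbound : ∀ n, dist (T (w (φ n))) (T l) ≤ lam * dist (w (φ n)) l :=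
          fun n => hcontr _ _ (hφS n)
        have hdto : Tendsto (fun n => lam * dist (w (φ n)) l) atTop (𝓝 0) := by
          have := (tendsto_iff_dist_tendsto_zero.mp hwφ).const_mul lam
          simpa using this
        exact squeeze_zero (fun n => dist_nonneg) hbound hdto
      have hfix : T l = l := by
        have : Tendsto (fun n => T (w (φ n))) atTop (𝓝 l) := by
          have : (fun n => T (w (φ n))) = fun n => w (φ n + k) :=
            funext fun n => hTw (φ n)
          rw [this]; exact hwφk
        exact tendsto_nhds_unique hTl this
      -- the orbit of x converges to l
      refine ⟨l, hfix, ?_⟩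
      have horbit : ∀ n, T^[n] x = w (n * k) := by
        intro n
        simp [hw, Nat.mul_div_cancel n hk, Nat.mul_mod_left, hc0]
      have : Tendsto (fun n => w (n * k)) atTop (𝓝 l) := by
        apply hl.comp
        apply tendsto_atTop_atTop.mpr
        intro b
        exact ⟨b, fun a ha => le_trans ha (Nat.le_mul_of_pos_right a hk)⟩
      exact this.congr (fun n => (horbit n).symm)
  · -- uniqueness
    intro z1 z2 h1 h2 hrel
    obtain ⟨C, hC⟩ := hcontrChain z1 z2 hrel
    have hC' : ∀ n, dist z1 z2 ≤ lam ^ n * C := by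
      intro n
      have := hC n
      rwa [Function.iterate_fixed h1, Function.iterate_fixed h2] at this
    have hlim : Tendsto (fun n => lam ^ n * C) atTop (𝓝 0) := by
      have := (tendsto_pow_atTop_nhds_zero_of_lt_one hlam0.le hlam1).mul_const C
      simpa using this
    have : dist z1 z2 ≤ 0 := ge_of_tendsto' hlim hC'
    exact dist_le_zero.mp this
end

section
/- Edelstein-type contraction principle: let (X,d) be a complete metric space, ε > 0, λ ∈ (0,1), and T : X → X satisfying d(Tx,Ty) ≤ λ d(x,y) whenever d(x,y) < ε. Suppose X is [d<ε]-chain-connected (any two points are joined by a finite chain of consecutive points at distance < ε). Then T has a unique fixed point z, and for every x ∈ X, T^n x → z. -/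
open Filter Topology

private def csum {X : Type*} [MetricSpace X] : List X → ℝ
  | [] => 0
  | [_] => 0
  | a :: b :: t => dist a b + csum (b :: t)

private lemma csum_nonneg {X : Type*} [MetricSpace X] (l : List X) : 0 ≤ csum l := by
  match l with
  | [] => simp [csum]
  | [_] => simp [csum]
  | a :: b :: t =>
    have := csum_nonneg (b :: t)
    have := dist_nonneg (x := a) (y := b)
    simp [csum]; linarith

private lemma dist_head_last {X : Type*} [MetricSpace X] :
    ∀ (l : List X) (a b : X), l.head? = some a → l.getLast? = some b →
      dist a b ≤ csum l := by
  intro l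
  match l with
  | [] => intro a b h; simp at h
  | [c] =>
    intro a b ha hb
    simp at ha hb
    subst ha; subst hb
    simp [csum]
  | c :: d :: t =>
    intro a b ha hb
    have ha' : a = c := by simp at ha; exact ha.symm
    subst ha'
    have hb' : (d :: t).getLast? = some b := by
      simpa using hb
    have ih := dist_head_last (d :: t) d b (by simp) hb'
    calc dist a b ≤ dist a d + dist d b := dist_triangle _ _ _
      _ ≤ dist a d + csum (d :: t) := by linarith
      _ = csum (a :: d :: t) := by simp [csum]

private lemma csum_map {X : Type*} [MetricSpace X] (T : X → X) (ε lam : ℝ)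
    (hlam1 : lam ≤ 1)
    (hcontr : ∀ x y : X, dist x y < ε → dist (T x) (T y) ≤ lam * dist x y) :
    ∀ (l : List X), l.Chain' (fun a b => dist a b < ε) →
      (l.map T).Chain' (fun a b => dist a b < ε) ∧
        csum (l.map T) ≤ lam * csum l := by
  intro l
  match l with
  | [] => intro _; simp [csum, List.Chain', List.isChain_nil]
  | [_] => intro _; simp [csum, List.Chain', List.isChain_singleton]
  | a :: b :: t =>
    intro hch
    rw [List.Chain', List.isChain_cons_cons] at hch
    obtain ⟨hab, hrest⟩ := hch
    obtain ⟨ih1, ih2⟩ := csum_map T ε lam hlam1 hcontr (b :: t) hrest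
    have hTab : dist (T a) (T b) ≤ lam * dist a b := hcontr a b hab
    have hd : 0 ≤ dist a b := dist_nonneg
    constructor
    · rw [List.map_cons, List.map_cons, List.Chain', List.isChain_cons_cons]
      refine ⟨lt_of_le_of_lt hTab ?_, by simpa [List.Chain'] using ih1⟩
      calc lam * dist a b ≤ 1 * dist a b := by nlinarith
        _ = dist a b := one_mul _
        _ < ε := hab
    · simp only [List.map_cons, csum] at *
      have : csum (T b :: t.map T) ≤ lam * csum (b :: t) := by simpa using ih2
      nlinarith

private lemma key_iter {X : Type*} [MetricSpace X] (T : X → X) (ε lam : ℝ)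
    (hlam0 : 0 ≤ lam) (hlam1 : lam ≤ 1)
    (hcontr : ∀ x y : X, dist x y < ε → dist (T x) (T y) ≤ lam * dist x y)
    (hconn : ∀ x y : X, ∃ l : List X, l.head? = some x ∧ l.getLast? = some y ∧
      l.Chain' (fun a b => dist a b < ε)) (x y : X) :
    ∃ C : ℝ, 0 ≤ C ∧ ∀ n, dist (T^[n] x) (T^[n] y) ≤ lam ^ n * C := by
  obtain ⟨l, hhd, hlast, hch⟩ := hconn x y
  refine ⟨csum l, csum_nonneg l, fun n => ?_⟩
  -- show the mapped chain works
  have main : ∀ n : ℕ, (l.map T^[n]).Chain' (fun a b => dist a b < ε) ∧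
      csum (l.map T^[n]) ≤ lam ^ n * csum l := by
    intro n
    induction n with
    | zero => exact ⟨by simpa using hch, by simp⟩
    | succ n ih =>
      obtain ⟨ih1, ih2⟩ := ih
      obtain ⟨h1, h2⟩ := csum_map T ε lam hlam1 hcontr (l.map T^[n]) ih1
      have hmap : l.map T^[n+1] = (l.map T^[n]).map T := by
        rw [List.map_map]
        congr 1
        funext a
        exact Function.iterate_succ_apply' T n a
      rw [hmap]
      refine ⟨h1, h2.trans ?_⟩
      rw [pow_succ, mul_comm (lam ^ n) lam, mul_assoc]
      exact mul_le_mul_of_nonneg_left ih2 hlam0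
  obtain ⟨_, h2⟩ := main n
  have hhd' : (l.map T^[n]).head? = some (T^[n] x) := by
    rw [List.head?_map, hhd]; rfl
  have hlast' : (l.map T^[n]).getLast? = some (T^[n] y) := by
    rw [List.getLast?_map, hlast]; rfl
  exact (dist_head_last _ _ _ hhd' hlast').trans h2

/-- Edelstein-type contraction principle on chain-connected complete metric
spaces. -/
theorem stmt_16 {X : Type*} [MetricSpace X] [CompleteSpace X] [Nonempty X]
    (T : X → X) (ε lam : ℝ) (hε : 0 < ε) (hlam0 : 0 < lam) (hlam1 : lam < 1)
    (hcontr : ∀ x y : X, dist x y < ε → dist (T x) (T y) ≤ lam * dist x y)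
    (hconn : ∀ x y : X, ∃ l : List X, l.head? = some x ∧ l.getLast? = some y ∧
      l.Chain' (fun a b => dist a b < ε)) :
    ∃ z : X, T z = z ∧ (∀ w, T w = w → w = z) ∧
      ∀ x, Tendsto (fun n => T^[n] x) atTop (𝓝 z) := by
  have key := key_iter T ε lam hlam0.le hlam1.le hcontr hconn
  have hgeo : ∀ C : ℝ, Tendsto (fun n : ℕ => lam ^ n * C) atTop (𝓝 0) := by
    intro C
    have := (tendsto_pow_atTop_nhds_zero_of_lt_one hlam0.le hlam1).mul_const C
    simpa using this
  obtain ⟨x0⟩ := ‹Nonempty X›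
  obtain ⟨C, hC0, hC⟩ := key x0 (T x0)
  have hcauchy : CauchySeq (fun n => T^[n] x0) := by
    apply cauchySeq_of_le_geometric lam C hlam1
    intro n
    have := hC n
    rw [← Function.iterate_succ_apply T n x0] at this
    calc dist (T^[n] x0) (T^[n+1] x0) ≤ lam ^ n * C := this
      _ = C * lam ^ n := mul_comm _ _
  obtain ⟨z, hz⟩ := cauchySeq_tendsto_of_complete hcauchy
  have hTcont : Continuous T := by
    rw [Metric.continuous_iff]
    intro b δ hδ
    refine ⟨min ε δ, lt_min hε hδ, fun a ha => ?_⟩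
    have h1 : dist a b < ε := ha.trans_le (min_le_left _ _)
    have h2 : dist a b < δ := ha.trans_le (min_le_right _ _)
    have := hcontr a b h1
    nlinarith [dist_nonneg (x := a) (y := b)]
  have hfix : T z = z := by
    have h1 : Tendsto (fun n => T (T^[n] x0)) atTop (𝓝 (T z)) :=
      (hTcont.continuousAt.tendsto).comp hz
    have h2 : Tendsto (fun n => T (T^[n] x0)) atTop (𝓝 z) := by
      have := hz.comp (tendsto_add_atTop_nat 1)
      simpa [Function.comp_def, Function.iterate_succ_apply'] using this
    exact tendsto_nhds_unique h1 h2
  refine ⟨z, hfix, ?_, ?_⟩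
  · intro w hw
    obtain ⟨C', hC'0, hC'⟩ := key w z
    have hconst : ∀ n, dist w z ≤ lam ^ n * C' := by
      intro n
      have := hC' n
      rwa [Function.iterate_fixed hw, Function.iterate_fixed hfix] at this
    have : dist w z ≤ 0 :=
      le_of_tendsto_of_tendsto' tendsto_const_nhds (hgeo C') hconst
    have : dist w z = 0 := le_antisymm this dist_nonneg
    exact dist_eq_zero.mp this
  · intro x
    obtain ⟨C', hC'0, hC'⟩ := key x z
    rw [tendsto_iff_dist_tendsto_zero]
    apply squeeze_zero (fun n => dist_nonneg) (fun n => ?_) (hgeo C')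
    have := hC' n
    rwa [Function.iterate_fixed hfix] at this
end

section
/- Nieto–Rodríguez-López theorem (strong form): let (X,d,≤) be a quasi-ordered complete metric space such that every pair {x,y} has a lower and an upper bound, the comparability relation ⟨⟩ is d-almost-selfclosed, T is ≤-monotone, and d(Tx,Ty) ≤ λ d(x,y) with λ ∈ (0,1) whenever x and y are comparable. Then T has a unique fixed point z, and T^n x → z for every x ∈ X. -/
open Filter Topology

/-!
Iterates of two comparable points approach each other at a geometric rate, and by strong
connectedness any two points are linked through a common upper bound, so all orbits of `T` are
asymptotic to one another and each orbit is Cauchy. To see that the common limit `z` is fixed,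
interleave the orbits of `x₀` and of an upper bound `u` of `x₀` and `T x₀`: consecutive terms of
`x₀, u, T x₀, T u, T² x₀, …` are comparable, so almost-selfclosedness yields a subsequence
comparable to `z`, along which the contraction inequality forces `T z = z`.
-/

theorem Filter.Tendsto.of_even_odd {α : Type*} {f : ℕ → α} {l : Filter α}
    (h₀ : Tendsto (fun k => f (2 * k)) atTop l) (h₁ : Tendsto (fun k => f (2 * k + 1)) atTop l) :
    Tendsto f atTop l := by
  intro s hs
  obtain ⟨N₀, hN₀⟩ := eventually_atTop.1 (h₀ hs)
  obtain ⟨N₁, hN₁⟩ := eventually_atTop.1 (h₁ hs)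
  refine eventually_atTop.2 ⟨2 * (N₀ + N₁), fun n hn => ?_⟩
  obtain ⟨k, rfl | rfl⟩ := n.even_or_odd'
  · exact hN₀ k (by omega)
  · exact hN₁ k (by omega)

namespace Function

variable {X : Type*} {T : X → X} {R : X → X → Prop}

theorem rel_iterate (hR : ∀ x y, R x y → R (T x) (T y)) {x y : X} (h : R x y) :
    ∀ n, R (T^[n] x) (T^[n] y)
  | 0 => h
  | n + 1 => by
    rw [iterate_succ_apply', iterate_succ_apply']
    exact hR _ _ (rel_iterate hR h n)

def zigzag (T : X → X) (a b : X) : ℕ → X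
  | 0 => a
  | 1 => b
  | n + 2 => T (zigzag T a b n)

theorem zigzag_two_mul (a b : X) : ∀ k, zigzag T a b (2 * k) = T^[k] a
  | 0 => rfl
  | k + 1 => by
    rw [iterate_succ_apply', ← zigzag_two_mul a b k]
    rfl

theorem zigzag_two_mul_add_one (a b : X) : ∀ k, zigzag T a b (2 * k + 1) = T^[k] b
  | 0 => rfl
  | k + 1 => by
    rw [iterate_succ_apply', ← zigzag_two_mul_add_one a b k]
    rfl

theorem rel_zigzag_succ (hR : ∀ x y, R x y → R (T x) (T y)) {a b : X} (hab : R a b)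
    (hba : R b (T a)) : ∀ n, R (zigzag T a b n) (zigzag T a b (n + 1))
  | 0 => hab
  | 1 => hba
  | n + 2 => hR _ _ (rel_zigzag_succ hR hab hba n)

variable [MetricSpace X] {lam : ℝ}

theorem dist_iterate_le (hR : ∀ x y, R x y → R (T x) (T y))
    (hcontr : ∀ x y, R x y → dist (T x) (T y) ≤ lam * dist x y) (hlam : 0 ≤ lam)
    {x y : X} (h : R x y) : ∀ n, dist (T^[n] x) (T^[n] y) ≤ lam ^ n * dist x y
  | 0 => by simp
  | n + 1 => by
    rw [iterate_succ_apply', iterate_succ_apply']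
    calc dist (T (T^[n] x)) (T (T^[n] y)) ≤ lam * dist (T^[n] x) (T^[n] y) :=
          hcontr _ _ (rel_iterate hR h n)
      _ ≤ lam * (lam ^ n * dist x y) := by gcongr; exact dist_iterate_le hR hcontr hlam h n
      _ = lam ^ (n + 1) * dist x y := by ring

theorem dist_iterate_le_of_rel_of_rel (hR : ∀ x y, R x y → R (T x) (T y))
    (hcontr : ∀ x y, R x y → dist (T x) (T y) ≤ lam * dist x y) (hlam : 0 ≤ lam)
    {x w y : X} (hxw : R x w) (hwy : R w y) (n : ℕ) :
    dist (T^[n] x) (T^[n] y) ≤ (dist x w + dist w y) * lam ^ n :=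
  calc dist (T^[n] x) (T^[n] y) ≤ dist (T^[n] x) (T^[n] w) + dist (T^[n] w) (T^[n] y) :=
        dist_triangle _ _ _
    _ ≤ lam ^ n * dist x w + lam ^ n * dist w y :=
        add_le_add (dist_iterate_le hR hcontr hlam hxw n) (dist_iterate_le hR hcontr hlam hwy n)
    _ = (dist x w + dist w y) * lam ^ n := by ring

theorem tendsto_dist_iterate_of_rel_of_rel (hR : ∀ x y, R x y → R (T x) (T y))
    (hcontr : ∀ x y, R x y → dist (T x) (T y) ≤ lam * dist x y) (hlam₀ : 0 ≤ lam)
    (hlam₁ : lam < 1) {x w y : X} (hxw : R x w) (hwy : R w y) :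
    Tendsto (fun n => dist (T^[n] x) (T^[n] y)) atTop (𝓝 0) := by
  refine squeeze_zero (fun _ => dist_nonneg)
    (dist_iterate_le_of_rel_of_rel hR hcontr hlam₀ hxw hwy) ?_
  simpa using (tendsto_pow_atTop_nhds_zero_of_lt_one hlam₀ hlam₁).const_mul (dist x w + dist w y)

theorem cauchySeq_iterate_of_rel_of_rel (hR : ∀ x y, R x y → R (T x) (T y))
    (hcontr : ∀ x y, R x y → dist (T x) (T y) ≤ lam * dist x y) (hlam₀ : 0 ≤ lam)
    (hlam₁ : lam < 1) {x w : X} (hxw : R x w) (hwx : R w (T x)) :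
    CauchySeq (fun n => T^[n] x) := by
  refine cauchySeq_of_le_geometric lam (dist x w + dist w (T x)) hlam₁ fun n => ?_
  rw [iterate_succ_apply]
  exact dist_iterate_le_of_rel_of_rel hR hcontr hlam₀ hxw hwx n

theorem isFixedPt_of_tendsto_of_rel (hcontr : ∀ x y, R x y → dist (T x) (T y) ≤ lam * dist x y)
    {y : ℕ → X} {z : X} (hy : Tendsto y atTop (𝓝 z)) (hTy : Tendsto (T ∘ y) atTop (𝓝 z))
    (hyz : ∀ n, R (y n) z) : IsFixedPt T z := by
  have hTy' : Tendsto (T ∘ y) atTop (𝓝 (T z)) := by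
    refine tendsto_iff_dist_tendsto_zero.2 (squeeze_zero (fun _ => dist_nonneg)
      (fun n => hcontr _ _ (hyz n)) ?_)
    simpa using (tendsto_iff_dist_tendsto_zero.1 hy).const_mul lam
  exact tendsto_nhds_unique hTy' hTy

theorem exists_fixedPt_tendsto_iterate_of_rel [CompleteSpace X] [Nonempty X]
    (hR : ∀ x y, R x y → R (T x) (T y))
    (hcontr : ∀ x y, R x y → dist (T x) (T y) ≤ lam * dist x y) (hlam₀ : 0 ≤ lam)
    (hlam₁ : lam < 1) (hconn : ∀ x y, ∃ w, R x w ∧ R w y)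
    (hclosed : ∀ (s : ℕ → X) (l : X), (∀ n, R (s n) (s (n + 1))) → Tendsto s atTop (𝓝 l) →
      ∃ φ : ℕ → ℕ, StrictMono φ ∧ ∀ n, R (s (φ n)) l) :
    ∃ z, IsFixedPt T z ∧ (∀ w, IsFixedPt T w → w = z) ∧
      ∀ x, Tendsto (fun n => T^[n] x) atTop (𝓝 z) := by
  obtain ⟨x₀⟩ := ‹Nonempty X›
  obtain ⟨u, hx₀u, hux₀⟩ := hconn x₀ (T x₀)
  obtain ⟨z, hz⟩ := cauchySeq_tendsto_of_complete
    (cauchySeq_iterate_of_rel_of_rel hR hcontr hlam₀ hlam₁ hx₀u hux₀)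
  have horbit (x : X) : Tendsto (fun n => T^[n] x) atTop (𝓝 z) :=
    have ⟨_, hx₀w, hwx⟩ := hconn x₀ x
    hz.congr_dist (tendsto_dist_iterate_of_rel_of_rel hR hcontr hlam₀ hlam₁ hx₀w hwx)
  have hzigzag : Tendsto (zigzag T x₀ u) atTop (𝓝 z) :=
    .of_even_odd (by simpa only [zigzag_two_mul] using hz)
      (by simpa only [zigzag_two_mul_add_one] using horbit u)
  obtain ⟨φ, hφ, hφz⟩ := hclosed _ z (rel_zigzag_succ hR hx₀u hux₀) hzigzag
  have hfix : IsFixedPt T z := isFixedPt_of_tendsto_of_rel hcontr (hzigzag.comp hφ.tendsto_atTop)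
    (hzigzag.comp ((tendsto_add_atTop_nat 2).comp hφ.tendsto_atTop)) hφz
  refine ⟨z, hfix, fun w hw => tendsto_nhds_unique ?_ (horbit w), horbit⟩
  simp only [iterate_fixed hw, tendsto_const_nhds]

end Function

theorem stmt_18_general {X : Type*} [MetricSpace X] [CompleteSpace X] [Nonempty X]
    (le : X → X → Prop)
    (hbounds : ∀ x y : X, (∃ l, le l x ∧ le l y) ∧ (∃ u, le x u ∧ le y u))
    (hasc : ∀ (z : ℕ → X) (l : X),
      (∀ n, le (z n) (z (n + 1)) ∨ le (z (n + 1)) (z n)) →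
      Tendsto z atTop (𝓝 l) →
      ∃ φ : ℕ → ℕ, StrictMono φ ∧ ∀ n, le (z (φ n)) l ∨ le l (z (φ n)))
    (T : X → X)
    (hmono : (∀ x y, le x y → le (T x) (T y)) ∨
             (∀ x y, le x y → le (T y) (T x)))
    (lam : ℝ) (hlam0 : 0 < lam) (hlam1 : lam < 1)
    (hcontr : ∀ x y : X, (le x y ∨ le y x) →
      dist (T x) (T y) ≤ lam * dist x y) :
    ∃ z : X, T z = z ∧ (∀ w, T w = w → w = z) ∧
      ∀ x, Tendsto (fun n => T^[n] x) atTop (𝓝 z) := by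
  have hcomp : ∀ x y, (le x y ∨ le y x) → (le (T x) (T y) ∨ le (T y) (T x)) := by
    rcases hmono with hm | hm
    · exact fun x y h => h.imp (hm x y) (hm y x)
    · exact fun x y h => h.symm.imp (hm y x) (hm x y)
  have hconn : ∀ x y, ∃ w, (le x w ∨ le w x) ∧ (le w y ∨ le y w) := fun x y =>
    have ⟨_, u, hxu, hyu⟩ := hbounds x y
    ⟨u, .inl hxu, .inr hyu⟩
  exact Function.exists_fixedPt_tendsto_iterate_of_rel hcomp hcontr hlam0.le hlam1 hconn hasc

/-- Nieto–Rodríguez-López theorem (strong form). -/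
theorem stmt_18 {X : Type*} [MetricSpace X] [CompleteSpace X] [Nonempty X]
    (le : X → X → Prop)
    (hrefl : ∀ x, le x x) (htrans : ∀ x y z, le x y → le y z → le x z)
    (hbounds : ∀ x y : X, (∃ l, le l x ∧ le l y) ∧ (∃ u, le x u ∧ le y u))
    (hasc : ∀ (z : ℕ → X) (l : X),
      (∀ n, le (z n) (z (n + 1)) ∨ le (z (n + 1)) (z n)) →
      Tendsto z atTop (𝓝 l) →
      ∃ φ : ℕ → ℕ, StrictMono φ ∧ ∀ n, le (z (φ n)) l ∨ le l (z (φ n)))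
    (T : X → X)
    (hmono : (∀ x y, le x y → le (T x) (T y)) ∨
             (∀ x y, le x y → le (T y) (T x)))
    (lam : ℝ) (hlam0 : 0 < lam) (hlam1 : lam < 1)
    (hcontr : ∀ x y : X, (le x y ∨ le y x) →
      dist (T x) (T y) ≤ lam * dist x y) :
    ∃ z : X, T z = z ∧ (∀ w, T w = w → w = z) ∧
      ∀ x, Tendsto (fun n => T^[n] x) atTop (𝓝 z) :=
  stmt_18_general le hbounds hasc T hmono lam hlam0 hlam1 hcontr
end
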